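/- Let H be a finite-dimensional real inner product space, let β > 0, let f : H → ℝ ∪ {+∞} be proper, lower semicontinuous, and convex, let g : H → ℝ be convex and differentiable with β-Lipschitz gradient, and assume that f + g attains its minimum at some point of H. Let x₀ ∈ dom f, let 0 < ε < 1/β, let (γₙ) be a sequence in [ε, 2/β − ε], and define the proximal gradient iterates by xₙ₊₁ = prox_{γₙ f}(xₙ − γₙ ∇g(xₙ)). Then the sequence (xₙ) converges to a minimizer of f + g. -/

import Mathlib

/-!
The iteration is a forward–backward step for the inclusion `0 ∈ ∂f x + ∇g x`: the prox step says
exactly that `(xₙ - γₙ ∇g xₙ - xₙ₊₁) / γₙ ∈ ∂f xₙ₊₁`. By the Baillon–Haddad theorem `∇g` is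
`β⁻¹`-cocoercive; together with the monotonicity of `∂f` this gives, for every zero `q` of
`∂f + ∇g`, the Fejér inequality `‖xₙ₊₁ - q‖² + (εβ/2) ‖xₙ₊₁ - xₙ‖² ≤ ‖xₙ - q‖²`. Taking for `q` the
given minimizer, the iterates are bounded and `xₙ₊₁ - xₙ → 0`, so a subsequence converges to some
`p`; since `f` is lower semicontinuous the graph of `∂f` is closed, so `p` is again a zero of
`∂f + ∇g`, i.e. a minimizer. Fejér monotonicity with respect to `p` then makes the whole sequence
converge to `p`.
-/

open Filter Topology

noncomputable section

/-- Convexity for extended-real-valued functions. -/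
def ConvexE {E : Type*} [AddCommGroup E] [Module ℝ E] (f : E → EReal) : Prop :=
  ∀ x y : E, ∀ a b : ℝ, 0 ≤ a → 0 ≤ b → a + b = 1 →
    f (a • x + b • y) ≤ (a : EReal) * f x + (b : EReal) * f y

open Set AffineMap

local notation "⟪" a ", " b "⟫" => @inner ℝ _ _ a b

theorem LowerSemicontinuousAt.le_of_tendsto {α γ ι : Type*} [TopologicalSpace α] [LinearOrder γ]
    [TopologicalSpace γ] [OrderTopology γ] [DenselyOrdered γ] {f : α → γ} {p : α}
    (hf : LowerSemicontinuousAt f p) {l : Filter ι} [l.NeBot] {q : ι → α} {r : ι → γ} {b : γ}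
    (hq : Tendsto q l (𝓝 p)) (hr : Tendsto r l (𝓝 b)) (hle : ∀ᶠ k in l, f (q k) ≤ r k) :
    f p ≤ b := by
  by_contra! hlt
  obtain ⟨c, hbc, hcp⟩ := exists_between hlt
  obtain ⟨k, hfk, hrk, hle⟩ :=
    ((hq.eventually (hf c hcp)).and ((hr.eventually (gt_mem_nhds hbc)).and hle)).exists
  exact (hfk.trans_le hle).not_gt hrk

lemma tendsto_zero_of_add_mul_sq_le {a b : ℕ → ℝ} {c : ℝ} (hc : 0 < c) (ha : ∀ n, 0 ≤ a n)
    (h : ∀ n, a (n + 1) + c * b n ^ 2 ≤ a n) : Tendsto b atTop (𝓝 0) := by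
  have hanti : Antitone a :=
    antitone_nat_of_succ_le fun n => by nlinarith [h n, mul_nonneg hc.le (sq_nonneg (b n))]
  have hconv := tendsto_atTop_ciInf hanti ⟨0, by rintro _ ⟨n, rfl⟩; exact ha n⟩
  have hsq : Tendsto (fun n => b n ^ 2) atTop (𝓝 0) := by
    refine squeeze_zero (fun n => sq_nonneg _) (fun n => ?_)
      (by simpa using (hconv.sub (hconv.comp (tendsto_add_atTop_nat 1))).div_const c)
    rw [le_div_iff₀ hc]
    linarith [h n]
  rw [tendsto_zero_iff_norm_tendsto_zero]
  simpa [Function.comp_def, Real.sqrt_sq_eq_abs] using (Real.continuous_sqrt.tendsto 0).comp hsq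

lemma tendsto_of_antitone_dist_of_tendsto_subseq {X : Type*} [PseudoMetricSpace X] {x : ℕ → X}
    {p : X} {φ : ℕ → ℕ} (hanti : Antitone fun n => dist (x n) p) (hφ : StrictMono φ)
    (hsub : Tendsto (x ∘ φ) atTop (𝓝 p)) : Tendsto x atTop (𝓝 p) := by
  rw [tendsto_iff_dist_tendsto_zero] at hsub ⊢
  exact (tendsto_iff_tendsto_subseq_of_antitone hanti hφ.tendsto_atTop).2 hsub

lemma ne_top_of_isMin_smul_add {X : Type*} {f : X → EReal} (hbot : ∀ z, f z ≠ ⊥) {c : ℝ}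
    (hc : 0 < c) {h : X → ℝ} {p z : X}
    (hmin : ∀ y, (c : EReal) * f p + (h p : EReal) ≤ (c : EReal) * f y + (h y : EReal))
    (hz : f z ≠ ⊤) : f p ≠ ⊤ := by
  intro htop
  have := hmin z
  rw [htop, EReal.mul_top_of_pos (by exact_mod_cast hc), EReal.top_add_coe,
    ← EReal.coe_toReal hz (hbot z), ← EReal.coe_mul, ← EReal.coe_add] at this
  exact EReal.coe_ne_top _ (top_le_iff.1 this)

section

variable {H : Type*} [NormedAddCommGroup H] [InnerProductSpace ℝ H]

lemma HasGradientAt.hasDerivAt_comp_lineMap [CompleteSpace H] {h : H → ℝ} {G x y : H} {t : ℝ}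
    (hh : HasGradientAt h G (lineMap x y t)) :
    HasDerivAt (h ∘ lineMap (k := ℝ) x y) ⟪G, y - x⟫ t :=
  (hh.hasFDerivAt.comp_hasDerivAt t hasDerivAt_lineMap).congr_deriv (by simp)

section SmoothConvex

variable [CompleteSpace H] {g : H → ℝ} {g' : H → H} {β : ℝ}

lemma ConvexOn.add_inner_le_of_hasGradientAt (hg : ConvexOn ℝ univ g) {G x : H}
    (hG : HasGradientAt g G x) (y : H) : g x + ⟪G, y - x⟫ ≤ g y := by
  have hderiv : HasDerivAt (g ∘ lineMap (k := ℝ) x y) ⟪G, y - x⟫ 0 :=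
    HasGradientAt.hasDerivAt_comp_lineMap (by simpa using hG)
  have := (hg.comp_affineMap (lineMap x y)).le_slope_of_hasDerivAt (mem_univ 0) (mem_univ 1)
    one_pos hderiv
  simp only [slope_def_field, Function.comp_apply, lineMap_apply_one, lineMap_apply_zero,
    sub_zero, div_one] at this
  linarith

lemma le_add_inner_add_of_lipschitz_gradient (hgrad : ∀ z, HasGradientAt g (g' z) z)
    (hlip : ∀ z w, ‖g' z - g' w‖ ≤ β * ‖z - w‖) (x y : H) :
    g y ≤ g x + ⟪g' x, y - x⟫ + β / 2 * ‖y - x‖ ^ 2 := by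
  set ψ : ℝ → ℝ := fun t => g (lineMap x y t) - t * ⟪g' x, y - x⟫ - β / 2 * t ^ 2 * ‖y - x‖ ^ 2
  have hψ : ∀ t, HasDerivAt ψ (⟪g' (lineMap x y t) - g' x, y - x⟫ - β * t * ‖y - x‖ ^ 2) t := by
    intro t
    have := (((hgrad _).hasDerivAt_comp_lineMap (x := x) (y := y)).sub
      ((hasDerivAt_id t).mul_const ⟪g' x, y - x⟫)).sub
      (((hasDerivAt_pow 2 t).const_mul (β / 2)).mul_const (‖y - x‖ ^ 2))
    exact this.congr_deriv (by rw [inner_sub_left]; push_cast; ring)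
  have hanti : AntitoneOn ψ (Icc 0 1) := by
    refine antitoneOn_of_deriv_nonpos (convex_Icc 0 1)
      (fun t _ => (hψ t).continuousAt.continuousWithinAt)
      (fun t _ => (hψ t).differentiableAt.differentiableWithinAt) fun t ht => ?_
    rw [interior_Icc] at ht
    rw [(hψ t).deriv, sub_nonpos]
    calc ⟪g' (lineMap x y t) - g' x, y - x⟫ ≤ ‖g' (lineMap x y t) - g' x‖ * ‖y - x‖ :=
          real_inner_le_norm _ _
      _ ≤ β * (t * ‖y - x‖) * ‖y - x‖ := by
          have hd : ‖lineMap x y t - x‖ = t * ‖y - x‖ := by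
            rw [← dist_eq_norm, dist_lineMap_left, Real.norm_eq_abs, abs_of_pos ht.1,
              dist_eq_norm']
          gcongr
          exact (hlip _ x).trans_eq (by rw [hd])
      _ = β * t * ‖y - x‖ ^ 2 := by ring
  have := hanti (left_mem_Icc.2 zero_le_one) (right_mem_Icc.2 zero_le_one) zero_le_one
  simp only [ψ, lineMap_apply_one, lineMap_apply_zero] at this
  linarith

theorem ConvexOn.cocoercive_of_lipschitz_gradient (hβ : 0 < β) (hg : ConvexOn ℝ univ g)
    (hgrad : ∀ z, HasGradientAt g (g' z) z) (hlip : ∀ z w, ‖g' z - g' w‖ ≤ β * ‖z - w‖)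
    (x y : H) : β⁻¹ * ‖g' x - g' y‖ ^ 2 ≤ ⟪g' x - g' y, x - y⟫ := by
  -- the gradient inequality at `x` and the descent lemma at `y`, both tested at `y - β⁻¹ • w`
  have key : ∀ x y : H, g x + ⟪g' x, y - x⟫ + (2 * β)⁻¹ * ‖g' y - g' x‖ ^ 2 ≤ g y := by
    intro x y
    set w := g' y - g' x
    set z := y - β⁻¹ • w
    have hlow := hg.add_inner_le_of_hasGradientAt (hgrad x) z
    have hup := le_add_inner_add_of_lipschitz_gradient hgrad hlip y z
    have hzx : z - x = (y - x) - β⁻¹ • w := by simp only [z]; abel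
    have hzy : z - y = -(β⁻¹ • w) := by simp only [z]; abel
    rw [hzx, inner_sub_right, real_inner_smul_right] at hlow
    rw [hzy, inner_neg_right, real_inner_smul_right, norm_neg, norm_smul, Real.norm_eq_abs,
      abs_of_pos (inv_pos.2 hβ)] at hup
    have hw : ⟪g' y, w⟫ - ⟪g' x, w⟫ = ‖w‖ ^ 2 := by
      rw [← inner_sub_left, real_inner_self_eq_norm_sq]
    have : β / 2 * (β⁻¹ * ‖w‖) ^ 2 = (2 * β)⁻¹ * ‖w‖ ^ 2 := by field_simp
    have : β⁻¹ * ⟪g' y, w⟫ - β⁻¹ * ⟪g' x, w⟫ = 2 * ((2 * β)⁻¹ * ‖w‖ ^ 2) := by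
      rw [← mul_sub, hw]; field_simp
    linarith
  have h₁ := key x y
  have h₂ := key y x
  have hx : ⟪g' x, x - y⟫ = -⟪g' x, y - x⟫ := by rw [← inner_neg_right, neg_sub]
  have : (2 * β)⁻¹ * ‖g' y - g' x‖ ^ 2 + (2 * β)⁻¹ * ‖g' y - g' x‖ ^ 2
      = β⁻¹ * ‖g' y - g' x‖ ^ 2 := by field_simp; ring
  rw [norm_sub_rev] at h₂ ⊢
  rw [inner_sub_left]
  linarith

end SmoothConvex

section ConvexEReal

variable {f : H → EReal}

/-- The subgradient inequality, written in `ℝ` on `dom f`, where `EReal.toReal` is faithful. -/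
def IsSubgradient (f : H → EReal) (q w : H) : Prop :=
  f q ≠ ⊤ ∧ ∀ y, f y ≠ ⊤ → (f q).toReal + ⟪w, y - q⟫ ≤ (f y).toReal

/-- `p = prox_{γf} u`. -/
def IsProxPoint (f : H → EReal) (γ : ℝ) (u p : H) : Prop :=
  ∀ y, (γ : EReal) * f p + ((1 / 2 * ‖u - p‖ ^ 2 : ℝ) : EReal) ≤
    (γ : EReal) * f y + ((1 / 2 * ‖u - y‖ ^ 2 : ℝ) : EReal)

lemma ConvexE.apply_lineMap_le (hf : ConvexE f) (hbot : ∀ z, f z ≠ ⊥) {x y : H}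
    (hx : f x ≠ ⊤) (hy : f y ≠ ⊤) {t : ℝ} (ht : t ∈ Icc (0 : ℝ) 1) :
    f (lineMap x y t) ≤ (((1 - t) * (f x).toReal + t * (f y).toReal : ℝ) : EReal) := by
  have := hf x y (1 - t) t (by linarith [ht.2]) ht.1 (by ring)
  rwa [← lineMap_apply_module, ← EReal.coe_toReal hx (hbot x), ← EReal.coe_toReal hy (hbot y),
    ← EReal.coe_mul, ← EReal.coe_mul, ← EReal.coe_add] at this

lemma IsSubgradient.inner_sub_nonneg {p q v w : H} (hp : IsSubgradient f p v)
    (hq : IsSubgradient f q w) : 0 ≤ ⟪v - w, p - q⟫ := by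
  have h₁ := hp.2 q hq.1
  have h₂ := hq.2 p hp.1
  have : ⟪v, q - p⟫ = -⟪v, p - q⟫ := by rw [← inner_neg_right, neg_sub]
  rw [inner_sub_left]
  linarith

theorem IsSubgradient.of_tendsto (hlsc : LowerSemicontinuous f) (hbot : ∀ z, f z ≠ ⊥) {z : H}
    (hz : f z ≠ ⊤) {ι : Type*} {l : Filter ι} [l.NeBot] {q w : ι → H} {p v : H}
    (hq : Tendsto q l (𝓝 p)) (hw : Tendsto w l (𝓝 v)) (h : ∀ k, IsSubgradient f (q k) (w k)) :
    IsSubgradient f p v := by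
  have hle : ∀ y, f y ≠ ⊤ → f p ≤ (((f y).toReal - ⟪v, y - p⟫ : ℝ) : EReal) := by
    intro y hy
    have hr : Tendsto (fun k => (((f y).toReal - ⟪w k, y - q k⟫ : ℝ) : EReal)) l
        (𝓝 (((f y).toReal - ⟪v, y - p⟫ : ℝ) : EReal)) :=
      (continuous_coe_real_ereal.tendsto _).comp
        (tendsto_const_nhds.sub (hw.inner (tendsto_const_nhds.sub hq)))
    refine (hlsc.lowerSemicontinuousAt p).le_of_tendsto hq hr (Eventually.of_forall fun k => ?_)
    rw [← EReal.coe_toReal (h k).1 (hbot _)]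
    exact EReal.coe_le_coe_iff.2 (by linarith [(h k).2 y hy])
  have hp : f p ≠ ⊤ := ne_top_of_le_ne_top (EReal.coe_ne_top _) (hle z hz)
  refine ⟨hp, fun y hy => ?_⟩
  have := hle y hy
  rw [← EReal.coe_toReal hp (hbot p), EReal.coe_le_coe_iff] at this
  linarith

theorem ConvexE.isSubgradient_of_isMin_smul_add [CompleteSpace H] (hf : ConvexE f)
    (hbot : ∀ z, f z ≠ ⊥) {c : ℝ} (hc : 0 < c) {h : H → ℝ} {p G z : H} (hG : HasGradientAt h G p)
    (hz : f z ≠ ⊤)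
    (hmin : ∀ y, (c : EReal) * f p + (h p : EReal) ≤ (c : EReal) * f y + (h y : EReal)) :
    IsSubgradient f p (-c⁻¹ • G) := by
  have hp := ne_top_of_isMin_smul_add hbot hc hmin hz
  refine ⟨hp, fun y hy => ?_⟩
  set F : H → ℝ := fun w => (f w).toReal
  -- convexity of `f` on the segment `[p, y]` bounds the difference quotients of `h` from below
  have hslope : ∀ t ∈ Ioc (0 : ℝ) 1, c * (F p - F y) ≤ t⁻¹ * (h (lineMap p y t) - h p) := by
    intro t ht
    have hconv :
        (c : EReal) * f (lineMap p y t) ≤ ((c * ((1 - t) * F p + t * F y) : ℝ) : EReal) := by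
      rw [EReal.coe_mul]
      gcongr
      exact hf.apply_lineMap_le hbot hp hy (Ioc_subset_Icc_self ht)
    have := (hmin (lineMap p y t)).trans (add_le_add hconv le_rfl)
    rw [← EReal.coe_toReal hp (hbot p), ← EReal.coe_mul, ← EReal.coe_add, ← EReal.coe_add,
      EReal.coe_le_coe_iff] at this
    rw [le_inv_mul_iff₀ ht.1]
    linarith
  have hderiv : HasDerivAt (h ∘ lineMap (k := ℝ) p y) ⟪G, y - p⟫ 0 :=
    HasGradientAt.hasDerivAt_comp_lineMap (by simpa using hG)
  have hlim : c * (F p - F y) ≤ ⟪G, y - p⟫ := by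
    refine ge_of_tendsto (by simpa using hderiv.tendsto_slope_zero_right) ?_
    filter_upwards [Ioc_mem_nhdsGT (zero_lt_one' ℝ)] with t ht
    simpa using hslope t ht
  have : F p - F y ≤ c⁻¹ * ⟪G, y - p⟫ := by rwa [le_inv_mul_iff₀ hc]
  rw [real_inner_smul_left, neg_mul]
  linarith

theorem IsProxPoint.isSubgradient [CompleteSpace H] (hf : ConvexE f) (hbot : ∀ z, f z ≠ ⊥)
    {γ : ℝ} (hγ : 0 < γ) {u p z : H} (hp : IsProxPoint f γ u p) (hz : f z ≠ ⊤) :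
    IsSubgradient f p (γ⁻¹ • (u - p)) := by
  have hG : HasGradientAt (fun y => 1 / 2 * ‖u - y‖ ^ 2) (p - u) p := by
    rw [hasGradientAt_iff_hasFDerivAt]
    refine ((((hasFDerivAt_id p).const_sub u).norm_sq).const_mul (1 / 2 : ℝ)).congr_fderiv ?_
    ext v
    simp
  have := hf.isSubgradient_of_isMin_smul_add hbot hγ hG hz hp
  rwa [neg_smul, ← smul_neg, neg_sub] at this

theorem IsSubgradient.isMin_add [CompleteSpace H] (hbot : ∀ z, f z ≠ ⊥) {g : H → ℝ}
    (hg : ConvexOn ℝ univ g) {q G : H} (hG : HasGradientAt g G q) (hq : IsSubgradient f q (-G))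
    (y : H) : f q + (g q : EReal) ≤ f y + (g y : EReal) := by
  rcases eq_or_ne (f y) ⊤ with hy | hy
  · simp [hy]
  have h₁ := hq.2 y hy
  have h₂ := hg.add_inner_le_of_hasGradientAt hG y
  rw [inner_neg_left] at h₁
  rw [← EReal.coe_toReal hq.1 (hbot q), ← EReal.coe_toReal hy (hbot y)]
  exact_mod_cast (by linarith : (f q).toReal + g q ≤ (f y).toReal + g y)

end ConvexEReal

section ForwardBackward

variable {f : H → EReal}

lemma norm_sq_add_mul_norm_sub_sq_le {s d w : H} {β γ : ℝ} (hβ : 0 < β) (hγ : 0 ≤ γ)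
    (hmono : 0 ≤ ⟪s - d - γ • w, d⟫) (hco : β⁻¹ * ‖w‖ ^ 2 ≤ ⟪w, s⟫) :
    ‖d‖ ^ 2 + (1 - γ * β / 2) * ‖s - d‖ ^ 2 ≤ ‖s‖ ^ 2 := by
  have h₁ : ⟪s - d - γ • w, d⟫ = ⟪s, d⟫ - ‖d‖ ^ 2 - γ * ⟪w, d⟫ := by
    rw [inner_sub_left, inner_sub_left, real_inner_smul_left, real_inner_self_eq_norm_sq]
  have h₂ : ‖s - d‖ ^ 2 = ‖s‖ ^ 2 - 2 * ⟪s, d⟫ + ‖d‖ ^ 2 := norm_sub_sq_real s d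
  have h₃ : ⟪w, d⟫ = ⟪w, s⟫ - ⟪w, s - d⟫ := by rw [inner_sub_right]; ring
  have h₄ := mul_le_mul_of_nonneg_left (real_inner_le_norm w (s - d)) hγ
  have h₅ := mul_le_mul_of_nonneg_left hco hγ
  -- completing the square absorbs the cross term `γ ‖w‖ ‖s - d‖`
  have h₆ : 0 ≤ γ * β⁻¹ * ‖w‖ ^ 2 - γ * (‖w‖ * ‖s - d‖) + γ * β / 4 * ‖s - d‖ ^ 2 := by
    have : γ * β⁻¹ * ‖w‖ ^ 2 - γ * (‖w‖ * ‖s - d‖) + γ * β / 4 * ‖s - d‖ ^ 2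
        = γ * β⁻¹ / 4 * (2 * ‖w‖ - β * ‖s - d‖) ^ 2 := by field_simp; ring
    rw [this]; positivity
  rw [h₃] at h₁
  nlinarith

theorem IsSubgradient.norm_sub_sq_add_le_of_forward_backward {B : H → H} {β γ ε : ℝ}
    {x x' q : H} (hβ : 0 < β) (hε : 0 < ε) (hγ : γ ∈ Icc ε (2 / β - ε))
    (hco : β⁻¹ * ‖B x - B q‖ ^ 2 ≤ ⟪B x - B q, x - q⟫)
    (hx' : IsSubgradient f x' (γ⁻¹ • (x - γ • B x - x'))) (hq : IsSubgradient f q (-B q)) :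
    ‖x' - q‖ ^ 2 + ε * β / 2 * ‖x' - x‖ ^ 2 ≤ ‖x - q‖ ^ 2 := by
  have hγ₀ : 0 < γ := hε.trans_le hγ.1
  have hmono : 0 ≤ ⟪(x - q) - (x' - q) - γ • (B x - B q), x' - q⟫ := by
    have : (x - q) - (x' - q) - γ • (B x - B q) = γ • (γ⁻¹ • (x - γ • B x - x') - -B q) := by
      rw [smul_sub γ (γ⁻¹ • _), smul_inv_smul₀ hγ₀.ne']; module
    rw [this, real_inner_smul_left]
    exact mul_nonneg hγ₀.le (hx'.inner_sub_nonneg hq)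
  have key := norm_sq_add_mul_norm_sub_sq_le hβ hγ₀.le hmono hco
  have hc : ε * β / 2 ≤ 1 - γ * β / 2 := by
    have := mul_le_mul_of_nonneg_right hγ.2 hβ.le
    rw [sub_mul, div_mul_cancel₀ _ hβ.ne'] at this
    linarith
  rw [sub_sub_sub_cancel_right, norm_sub_rev x x'] at key
  linarith [mul_le_mul_of_nonneg_right hc (sq_nonneg ‖x' - x‖)]

theorem isSubgradient_neg_of_tendsto_forward_backward (hlsc : LowerSemicontinuous f)
    (hbot : ∀ z, f z ≠ ⊥) {z : H} (hz : f z ≠ ⊤) {B : H → H} (hB : Continuous B) {ε : ℝ}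
    (hε : 0 < ε) {γ : ℕ → ℝ} (hγ : ∀ k, ε ≤ γ k) {u v : ℕ → H} {p : H}
    (hu : Tendsto u atTop (𝓝 p)) (hv : Tendsto v atTop (𝓝 p))
    (h : ∀ k, IsSubgradient f (v k) ((γ k)⁻¹ • (u k - γ k • B (u k) - v k))) :
    IsSubgradient f p (-B p) := by
  have hres : Tendsto (fun k => (γ k)⁻¹ • (u k - v k)) atTop (𝓝 0) := by
    have huv : Tendsto (fun k => u k - v k) atTop (𝓝 0) := by simpa using hu.sub hv
    refine squeeze_zero_norm (fun k => ?_)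
      (by simpa using (tendsto_norm_zero.comp huv).const_mul ε⁻¹)
    rw [norm_smul, Real.norm_of_nonneg (inv_nonneg.2 (hε.trans_le (hγ k)).le)]
    gcongr
    exact hγ k
  have hsplit : ∀ k,
      (γ k)⁻¹ • (u k - γ k • B (u k) - v k) = (γ k)⁻¹ • (u k - v k) - B (u k) := by
    intro k
    rw [show u k - γ k • B (u k) - v k = (u k - v k) - γ k • B (u k) by abel, smul_sub,
      inv_smul_smul₀ (hε.trans_le (hγ k)).ne']
  refine IsSubgradient.of_tendsto hlsc hbot hz hv ?_ h
  simpa [hsplit] using hres.sub ((hB.tendsto p).comp hu)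

end ForwardBackward

end

theorem proximal_gradient_iterate_convergence_general
    {H : Type*} [NormedAddCommGroup H] [InnerProductSpace ℝ H] [FiniteDimensional ℝ H]
    (β : ℝ) (hβ : 0 < β)
    (f : H → EReal)
    (hf_proper : ∃ z, f z ≠ ⊤) (hf_ne_bot : ∀ z, f z ≠ ⊥)
    (hf_lsc : LowerSemicontinuous f) (hf_convex : ConvexE f)
    (g : H → ℝ) (g' : H → H)
    (hg_convex : ConvexOn ℝ Set.univ g)
    (hg_grad : ∀ z : H, HasGradientAt g (g' z) z)
    (hg_lip : ∀ z w : H, ‖g' z - g' w‖ ≤ β * ‖z - w‖)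
    (xstar : H)
    (hxstar : ∀ y : H, f xstar + (g xstar : EReal) ≤ f y + (g y : EReal))
    (ε : ℝ) (hε : 0 < ε)
    (γ : ℕ → ℝ) (hγ : ∀ n, γ n ∈ Set.Icc ε (2/β - ε))
    (x : ℕ → H)
    (hiter : ∀ n, ∀ y : H,
      (γ n : EReal) * f (x (n+1)) +
          ((1/2 * ‖(x n - γ n • g' (x n)) - x (n+1)‖^2 : ℝ) : EReal) ≤
        (γ n : EReal) * f y +
          ((1/2 * ‖(x n - γ n • g' (x n)) - y‖^2 : ℝ) : EReal)) :
    ∃ xlim : H, Tendsto x atTop (𝓝 xlim) ∧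
      ∀ y : H, f xlim + (g xlim : EReal) ≤ f y + (g y : EReal) := by
  obtain ⟨z, hz⟩ := hf_proper
  have hsub (n : ℕ) :
      IsSubgradient f (x (n + 1)) ((γ n)⁻¹ • (x n - γ n • g' (x n) - x (n + 1))) :=
    IsProxPoint.isSubgradient hf_convex hf_ne_bot (hε.trans_le (hγ n).1) (hiter n) hz
  have hfejer (q : H) (hq : IsSubgradient f q (-g' q)) (n : ℕ) :
      ‖x (n + 1) - q‖ ^ 2 + ε * β / 2 * ‖x (n + 1) - x n‖ ^ 2 ≤ ‖x n - q‖ ^ 2 :=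
    (hsub n).norm_sub_sq_add_le_of_forward_backward hβ hε (hγ n)
      (hg_convex.cocoercive_of_lipschitz_gradient hβ hg_grad hg_lip _ _) hq
  have hanti (q : H) (hq : IsSubgradient f q (-g' q)) : Antitone fun n => dist (x n) q := by
    refine antitone_nat_of_succ_le fun n => ?_
    rw [dist_eq_norm, dist_eq_norm, ← sq_le_sq₀ (norm_nonneg _) (norm_nonneg _)]
    nlinarith [hfejer q hq n,
      mul_nonneg (by positivity : 0 ≤ ε * β / 2) (sq_nonneg ‖x (n + 1) - x n‖)]
  have hxstar' : IsSubgradient f xstar (-g' xstar) := by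
    simpa using hf_convex.isSubgradient_of_isMin_smul_add hf_ne_bot one_pos (hg_grad xstar) hz
      (by simpa using hxstar)
  obtain ⟨p, -, φ, hφ, hxφ⟩ := tendsto_subseq_of_bounded Metric.isBounded_closedBall
    fun n => Metric.mem_closedBall.2 (hanti xstar hxstar' (Nat.zero_le n))
  have hstep : Tendsto (fun n => x (n + 1) - x n) atTop (𝓝 0) :=
    tendsto_zero_iff_norm_tendsto_zero.2 <|
      tendsto_zero_of_add_mul_sq_le (a := fun n => ‖x n - xstar‖ ^ 2) (by positivity)
        (fun n => sq_nonneg _) (hfejer xstar hxstar')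
  have hp : IsSubgradient f p (-g' p) :=
    isSubgradient_neg_of_tendsto_forward_backward hf_lsc hf_ne_bot hz
      (LipschitzWith.of_dist_le' (by simpa [dist_eq_norm] using hg_lip)).continuous hε
      (fun k => (hγ (φ k)).1) hxφ (by simpa using (hstep.comp hφ.tendsto_atTop).add hxφ)
      (fun k => hsub (φ k))
  exact ⟨p, tendsto_of_antitone_dist_of_tendsto_subseq (hanti p hp) hφ hxφ,
    hp.isMin_add hf_ne_bot hg_convex (hg_grad p)⟩

/-- Convergence of the proximal gradient iterates to a minimizer of `f + g`. -/
theorem proximal_gradient_iterate_convergence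
    {H : Type*} [NormedAddCommGroup H] [InnerProductSpace ℝ H] [FiniteDimensional ℝ H]
    (β : ℝ) (hβ : 0 < β)
    (f : H → EReal)
    (hf_proper : ∃ z, f z ≠ ⊤) (hf_ne_bot : ∀ z, f z ≠ ⊥)
    (hf_lsc : LowerSemicontinuous f) (hf_convex : ConvexE f)
    (g : H → ℝ) (g' : H → H)
    (hg_convex : ConvexOn ℝ Set.univ g)
    (hg_grad : ∀ z : H, HasGradientAt g (g' z) z)
    (hg_lip : ∀ z w : H, ‖g' z - g' w‖ ≤ β * ‖z - w‖)
    (xstar : H)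
    (hxstar : ∀ y : H, f xstar + (g xstar : EReal) ≤ f y + (g y : EReal))
    (ε : ℝ) (hε : 0 < ε) (hεβ : ε < 1/β)
    (γ : ℕ → ℝ) (hγ : ∀ n, γ n ∈ Set.Icc ε (2/β - ε))
    (x : ℕ → H) (hx0 : f (x 0) ≠ ⊤)
    (hiter : ∀ n, ∀ y : H,
      (γ n : EReal) * f (x (n+1)) +
          ((1/2 * ‖(x n - γ n • g' (x n)) - x (n+1)‖^2 : ℝ) : EReal) ≤
        (γ n : EReal) * f y +
          ((1/2 * ‖(x n - γ n • g' (x n)) - y‖^2 : ℝ) : EReal)) :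
    ∃ xlim : H, Tendsto x atTop (𝓝 xlim) ∧
      ∀ y : H, f xlim + (g xlim : EReal) ≤ f y + (g y : EReal) :=
  proximal_gradient_iterate_convergence_general β hβ f hf_proper hf_ne_bot hf_lsc hf_convex g g'
    hg_convex hg_grad hg_lip xstar hxstar ε hε γ hγ x hiter
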